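/- arXiv:2010.05377 — 3 statements merged into one kernel-verified Lean document; each statement's English description precedes it below -/
import Mathlib

section
/- Let M be a topological space, T : M → M a map, and φ = (φ₁, …, φₙ) : M → ℂ^n an injective continuous map which is a homeomorphism onto its image φ(M), such that each component is a Koopman eigenfunction, φⱼ ∘ T = λⱼ φⱼ, with |λⱼ| < 1 for all j, and such that 0 ∈ φ(M). Then the point m* ∈ M with φ(m*) = 0 is a fixed point of T (T m* = m*), and it is globally attracting: for every m₀ ∈ M the orbit T^k m₀ converges to m* as k → ∞. -/
open Filter Topology

/-! Each `φⱼ` is multiplied by `λⱼ` along every step of an orbit, so `φ(T^k m₀) → 0` in `ℂⁿ`;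
since `φ` is an embedding this is convergence `T^k m₀ → m*`, and `φ(T m*) = Λ φ(m*) = 0 = φ(m*)`
together with injectivity makes `m*` a fixed point. -/

theorem Function.Semiconj.apply_iterate_eq_pow_mul {M R : Type*} [Monoid R] {T : M → M}
    {f : M → R} {c : R} (hf : Function.Semiconj f T (c * ·)) (k : ℕ) (m : M) :
    f (T^[k] m) = c ^ k * f m := by
  rw [hf.iterate_right k, mul_left_iterate_apply]

theorem Function.Semiconj.tendsto_apply_iterate_zero {M R : Type*} [SeminormedRing R]
    {T : M → M} {f : M → R} {c : R} (hf : Function.Semiconj f T (c * ·)) (hc : ‖c‖ < 1)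
    (m : M) : Tendsto (fun k => f (T^[k] m)) atTop (𝓝 0) := by
  simpa only [hf.apply_iterate_eq_pow_mul, zero_mul] using
    (tendsto_pow_atTop_nhds_zero_of_norm_lt_one hc).mul_const (f m)

theorem stmt9_general {M : Type*} [TopologicalSpace M] {n : ℕ} (T : M → M)
    (φ : M → Fin n → ℂ)
    (hemb : Topology.IsEmbedding φ)
    (lam : Fin n → ℂ) (heig : ∀ j m, φ (T m) j = lam j * φ m j)
    (hlam : ∀ j, ‖lam j‖ < 1) :
    ∀ mstar : M, φ mstar = 0 →
      T mstar = mstar ∧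
      ∀ m₀ : M, Tendsto (fun k => T^[k] m₀) atTop (nhds mstar) := by
  intro mstar hstar
  refine ⟨hemb.injective ?_, fun m₀ => ?_⟩
  · funext j
    rw [heig, hstar, Pi.zero_apply, mul_zero]
  · rw [hemb.tendsto_nhds_iff, hstar, tendsto_pi_nhds]
    exact fun j =>
      Function.Semiconj.tendsto_apply_iterate_zero (f := (φ · j)) (heig j) (hlam j) m₀

/-- If `φ : M → ℂⁿ` is injective, continuous, a homeomorphism onto its image,
each component a Koopman eigenfunction with `|λⱼ| < 1`, and `0 ∈ φ(M)`, then the point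
`m*` with `φ(m*) = 0` is a globally attracting fixed point of `T`. -/
theorem stmt9 {M : Type*} [TopologicalSpace M] {n : ℕ} (T : M → M)
    (φ : M → Fin n → ℂ) (hcont : Continuous φ) (hinj : Function.Injective φ)
    (hemb : Topology.IsEmbedding φ)
    (lam : Fin n → ℂ) (heig : ∀ j m, φ (T m) j = lam j * φ m j)
    (hlam : ∀ j, ‖lam j‖ < 1)
    (h0 : (0 : Fin n → ℂ) ∈ Set.range φ) :
    ∀ mstar : M, φ mstar = 0 →
      T mstar = mstar ∧
      ∀ m₀ : M, Tendsto (fun k => T^[k] m₀) atTop (nhds mstar) :=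
  stmt9_general T φ hemb lam heig hlam
end

section
/- Let T : M → M, let (f, F) be an n-dimensional representation of T (f : M → ℂ^n, f ∘ T = F ∘ f), and let (g, A) be a linear representation with A an n×n diagonalizable complex matrix (g : M → ℂ^n, g ∘ T = A g). Suppose h : g(M) → f(M) is a bijection conjugating the representations with f = h ∘ g. Then there exist Koopman eigenfunctions φ = (φ₁, …, φₙ) of T (φⱼ ∘ T = λⱼ φⱼ, with λⱼ the eigenvalues of A) and a map H : ℂ^n → ℂ^n such that f(m) = H(φ(m)) for all m ∈ M; in particular each component of f lies in the subspace of observables generated by the eigenfunctions φ. -/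
/-- If a representation `(f, F)` of `T` is conjugate (via a bijection
`h : g(M) → f(M)`, `f = h ∘ g`) to a linear diagonalizable representation `(g, A)`,
then `f = H ∘ φ` for Koopman eigenfunctions `φ = (φ₁, …, φₙ)` and some map `H`; i.e.
`f` lies in the subspace of observables generated by the eigenfunctions. -/
theorem stmt13 {M : Type*} {n : ℕ} (T : M → M)
    (f : M → Fin n → ℂ) (F : (Fin n → ℂ) → Fin n → ℂ)
    (hf : ∀ m, f (T m) = F (f m))
    (g : M → Fin n → ℂ) (A : Matrix (Fin n) (Fin n) ℂ)
    (hg : ∀ m, g (T m) = A.mulVec (g m))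
    (lam : Fin n → ℂ) (P : Matrix (Fin n) (Fin n) ℂ) (hP : IsUnit P.det)
    (hdiag : P⁻¹ * A * P = Matrix.diagonal lam)
    (h : (Fin n → ℂ) → Fin n → ℂ)
    (hbij : Set.BijOn h (Set.range g) (Set.range f))
    (hconj : ∀ m, f m = h (g m)) :
    ∃ φ : Fin n → M → ℂ,
      (∀ j m, φ j (T m) = lam j * φ j m) ∧
      ∃ H : (Fin n → ℂ) → Fin n → ℂ, ∀ m, f m = H (fun j => φ j m) := by
  have hPP : P * P⁻¹ = 1 := Matrix.mul_nonsing_inv P hP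
  have hPP' : P⁻¹ * P = 1 := Matrix.nonsing_inv_mul P hP
  have key : P⁻¹ * A = Matrix.diagonal lam * P⁻¹ := by
    calc P⁻¹ * A = (P⁻¹ * A * P) * P⁻¹ := by rw [Matrix.mul_assoc, hPP, Matrix.mul_one]
    _ = Matrix.diagonal lam * P⁻¹ := by rw [hdiag]
  refine ⟨fun j m => (P⁻¹.mulVec (g m)) j, ?_, fun v => h (P.mulVec v), ?_⟩
  · intro j m
    have : P⁻¹.mulVec (g (T m)) = (Matrix.diagonal lam).mulVec (P⁻¹.mulVec (g m)) := by
      rw [hg, Matrix.mulVec_mulVec, key, ← Matrix.mulVec_mulVec]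
    have h2 := congrFun this j
    simpa [Matrix.mulVec_diagonal] using h2
  · intro m
    have : P.mulVec (fun j => (P⁻¹.mulVec (g m)) j) = g m := by
      rw [show (fun j => (P⁻¹.mulVec (g m)) j) = P⁻¹.mulVec (g m) from rfl,
        Matrix.mulVec_mulVec, hPP, Matrix.one_mulVec]
    show f m = h (P.mulVec fun j => P⁻¹.mulVec (g m) j)
    rw [this]; exact hconj m
end

section
/- Let (M, μ) be a probability space, T : M → M a measure-preserving transformation, and {e_j}_{j∈ℕ} an orthonormal basis of L²(μ). Let J = {j₁, …, jₙ} be a finite index set, write f = (e_{j₁}, …, e_{jₙ}) : M → ℂ^n, and suppose there are indices l₁, …, l_K ∉ J and maps F₁, …, F_K : ℂ^n → ℂ with e_{l_i} = F_i ∘ f μ-almost everywhere. Assume that for every k ∈ J, ⟨e_k ∘ T, e_l⟩ = 0 for all l ∉ J ∪ {l₁, …, l_K}. Then T admits a finite-dimensional nonlinear representation (f, F): there exists an n×(n+K) complex matrix A such that, μ-almost everywhere, f ∘ T = A · (f, F₁∘f, …, F_K∘f); in particular f ∘ T = F ∘ f almost everywhere for the map F(z) = A·(z, F₁(z), …, F_K(z)).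 -/
/-!
Expanding `e_k ∘ T` (for `k ∈ J`) in the orthonormal basis, the hypothesis kills every
coefficient outside `J ∪ {l₁, …, l_K}`, so by totality `e_k ∘ T` is a.e. the finite sum
`∑ ⟨e_k ∘ T, e_p⟩ e_p` over those `p`. Almost everywhere the functions `e_{lᵢ}` agree with
`Fᵢ ∘ f`, so this sum is linear in `(f, F₁ ∘ f, …, F_K ∘ f)`; an index listed several times
gets its coefficient divided by its multiplicity.
-/

open MeasureTheory Finset

section OrthonormalExpansion

variable {α ι : Type*} [MeasurableSpace α] {μ : Measure α} [DecidableEq ι]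

lemma integrable_mul_conj {f g : α → ℂ} (hf : MemLp f 2 μ) (hg : MemLp g 2 μ) :
    Integrable (fun x => f x * starRingEnd ℂ (g x)) μ :=
  hf.integrable_mul (q := 2) hg.star

lemma integral_sum_mul_conj_of_orthonormal {e : ι → α → ℂ} (he : ∀ i, MemLp (e i) 2 μ)
    (horth : ∀ i k, ∫ x, e i x * starRingEnd ℂ (e k x) ∂μ = if i = k then 1 else 0)
    (S : Finset ι) (c : ι → ℂ) (q : ι) :
    ∫ x, (∑ p ∈ S, c p * e p x) * starRingEnd ℂ (e q x) ∂μ = if q ∈ S then c q else 0 := by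
  simp_rw [Finset.sum_mul, mul_assoc]
  rw [integral_finsetSum S fun p _ => ((integrable_mul_conj (he p) (he q)).const_mul (c p))]
  simp_rw [integral_const_mul, horth, mul_ite, mul_one, mul_zero, Finset.sum_ite_eq']

lemma ae_eq_sum_of_inner_eq_zero_of_notMem {e : ι → α → ℂ} (he : ∀ i, MemLp (e i) 2 μ)
    (horth : ∀ i k, ∫ x, e i x * starRingEnd ℂ (e k x) ∂μ = if i = k then 1 else 0)
    (htotal : ∀ f : α → ℂ, MemLp f 2 μ →
      (∀ i, ∫ x, f x * starRingEnd ℂ (e i x) ∂μ = 0) → f =ᵐ[μ] 0)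
    {g : α → ℂ} (hg : MemLp g 2 μ) {S : Finset ι}
    (hS : ∀ q ∉ S, ∫ x, g x * starRingEnd ℂ (e q x) ∂μ = 0) :
    g =ᵐ[μ] fun x => ∑ p ∈ S, (∫ y, g y * starRingEnd ℂ (e p y) ∂μ) * e p x := by
  set c : ι → ℂ := fun p => ∫ y, g y * starRingEnd ℂ (e p y) ∂μ
  have hsum : MemLp (fun x => ∑ p ∈ S, c p * e p x) 2 μ :=
    memLp_finsetSum S fun p _ => (he p).const_mul (c p)
  have hcoeff : ∀ q, ∫ x, (g x - ∑ p ∈ S, c p * e p x) * starRingEnd ℂ (e q x) ∂μ = 0 := by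
    intro q
    simp_rw [sub_mul]
    rw [integral_sub (integrable_mul_conj hg (he q)) (integrable_mul_conj hsum (he q)),
      integral_sum_mul_conj_of_orthonormal he horth]
    by_cases hq : q ∈ S
    · simp [hq, c]
    · simp [hq, hS q hq]
  filter_upwards [htotal _ (hg.sub hsum) hcoeff] with x hx
  exact sub_eq_zero.mp hx

end OrthonormalExpansion

lemma Finset.sum_image_eq_sum_div_card_fiber {ι κ 𝕜 : Type*} [Fintype ι] [DecidableEq κ]
    [Semifield 𝕜] [CharZero 𝕜] (g : ι → κ) (c : κ → 𝕜) :
    ∑ p ∈ univ.image g, c p = ∑ i, c (g i) / #{i' | g i' = g i} := by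
  rw [Finset.sum_comp (fun p => c p / #{i' | g i' = p}) g]
  refine Finset.sum_congr rfl fun p hp => ?_
  obtain ⟨i, -, rfl⟩ := Finset.mem_image.mp hp
  have hcard : (#{i' | g i' = g i} : 𝕜) ≠ 0 :=
    Nat.cast_ne_zero.mpr (Finset.card_ne_zero.mpr ⟨i, by simp⟩)
  rw [nsmul_eq_mul, mul_div_cancel₀ _ hcard]

lemma Fin.comp_append {α β : Type*} {m n : ℕ} (f : α → β) (a : Fin m → α) (b : Fin n → α) :
    Fin.append (f ∘ a) (f ∘ b) = f ∘ Fin.append a b := by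
  ext i
  refine Fin.addCases (fun i => ?_) (fun i => ?_) i <;> simp

theorem stmt16_general {M : Type*} [MeasurableSpace M] (μ : Measure M)
    (T : M → M) (hT : MeasurePreserving T μ μ)
    (e : ℕ → M → ℂ) (he : ∀ j, MemLp (e j) 2 μ)
    (horth : ∀ j k : ℕ,
      ∫ x, e j x * (starRingEnd ℂ) (e k x) ∂μ = if j = k then 1 else 0)
    (htotal : ∀ f : M → ℂ, MemLp f 2 μ →
      (∀ j : ℕ, ∫ x, f x * (starRingEnd ℂ) (e j x) ∂μ = 0) → f =ᵐ[μ] 0)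
    {n K : ℕ} (j : Fin n → ℕ)
    (l : Fin K → ℕ)
    (Fn : Fin K → (Fin n → ℂ) → ℂ)
    (hFn : ∀ i : Fin K,
      (fun x => e (l i) x) =ᵐ[μ] fun x => Fn i (fun k => e (j k) x))
    (hzero : ∀ (k : Fin n) (p : ℕ), p ∉ Set.range j → p ∉ Set.range l →
      ∫ x, e (j k) (T x) * (starRingEnd ℂ) (e p x) ∂μ = 0) :
    ∃ A : Matrix (Fin n) (Fin (n + K)) ℂ,
      ∀ᵐ x ∂μ,
        (fun k : Fin n => e (j k) (T x)) =
          (fun z : Fin n → ℂ =>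
            fun k : Fin n => ∑ i : Fin (n + K), A k i * Fin.append z (fun q => Fn q z) i)
            (fun k : Fin n => e (j k) x) := by
  classical
  set idx : Fin (n + K) → ℕ := Fin.append j l
  set c : Fin n → ℕ → ℂ := fun k p => ∫ x, e (j k) (T x) * starRingEnd ℂ (e p x) ∂μ
  refine ⟨fun k i => c k (idx i) / #{i' | idx i' = idx i}, ?_⟩
  have hexpand : ∀ k, (fun x => e (j k) (T x)) =ᵐ[μ]
      fun x => ∑ p ∈ univ.image idx, c k p * e p x := by
    refine fun k => ae_eq_sum_of_inner_eq_zero_of_notMem he horth htotal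
      ((he (j k)).comp_measurePreserving hT) fun q hq => hzero k q ?_ ?_
    · rintro ⟨i, rfl⟩
      exact hq (Finset.mem_image.mpr ⟨Fin.castAdd K i, mem_univ _, Fin.append_left _ _ _⟩)
    · rintro ⟨i, rfl⟩
      exact hq (Finset.mem_image.mpr ⟨Fin.natAdd n i, mem_univ _, Fin.append_right _ _ _⟩)
  have hcoord : ∀ᵐ x ∂μ,
      Fin.append (fun k => e (j k) x) (fun q => Fn q fun k => e (j k) x) = fun i => e (idx i) x := by
    filter_upwards [ae_all_iff.mpr hFn] with x hx
    rw [← funext hx]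
    exact Fin.comp_append (e · x) j l
  filter_upwards [ae_all_iff.mpr hexpand, hcoord] with x hx hv
  funext k
  simp only [hv, hx k, Finset.sum_image_eq_sum_div_card_fiber idx, div_mul_eq_mul_div]

/-- Finite-section nonlinear representation. With `{e_j}` an orthonormal basis
of `L²(μ)`, `f = (e_{j₁},…,e_{jₙ})`, and extra basis functions `e_{l₁},…,e_{l_K}` that are
(a.e.) nonlinear functions `Fᵢ ∘ f` of `f`, if `⟨e_k ∘ T, e_p⟩ = 0` for all `k ∈ J` and
`p ∉ J ∪ {l₁,…,l_K}`, then `T` admits a finite-dimensional nonlinear representation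
`f ∘ T = A·(f, F₁∘f, …, F_K∘f)` a.e., i.e. `f ∘ T = F ∘ f` a.e. with
`F(z) = A·(z, F₁(z),…,F_K(z))`. -/
theorem stmt16 {M : Type*} [MeasurableSpace M] (μ : Measure M)
    [IsProbabilityMeasure μ] (T : M → M) (hT : MeasurePreserving T μ μ)
    (e : ℕ → M → ℂ) (he : ∀ j, MemLp (e j) 2 μ)
    (horth : ∀ j k : ℕ,
      ∫ x, e j x * (starRingEnd ℂ) (e k x) ∂μ = if j = k then 1 else 0)
    (htotal : ∀ f : M → ℂ, MemLp f 2 μ →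
      (∀ j : ℕ, ∫ x, f x * (starRingEnd ℂ) (e j x) ∂μ = 0) → f =ᵐ[μ] 0)
    {n K : ℕ} (j : Fin n → ℕ) (hjinj : Function.Injective j)
    (l : Fin K → ℕ) (hl : ∀ i, l i ∉ Set.range j)
    (Fn : Fin K → (Fin n → ℂ) → ℂ)
    (hFn : ∀ i : Fin K,
      (fun x => e (l i) x) =ᵐ[μ] fun x => Fn i (fun k => e (j k) x))
    (hzero : ∀ (k : Fin n) (p : ℕ), p ∉ Set.range j → p ∉ Set.range l →
      ∫ x, e (j k) (T x) * (starRingEnd ℂ) (e p x) ∂μ = 0) :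
    ∃ A : Matrix (Fin n) (Fin (n + K)) ℂ,
      ∀ᵐ x ∂μ,
        (fun k : Fin n => e (j k) (T x)) =
          (fun z : Fin n → ℂ =>
            fun k : Fin n => ∑ i : Fin (n + K), A k i * Fin.append z (fun q => Fn q z) i)
            (fun k : Fin n => e (j k) x) :=
  stmt16_general μ T hT e he horth htotal j l Fn hFn hzero
end
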